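/- arXiv:2502.00378 — 2 statements merged into one kernel-verified Lean document; each statement's English description precedes it below -/
import Mathlib

section
/- Let b ≥ 2, n ≥ 2, k ≥ 0, d ≥ 1 be integers with d dividing n − 1 and gcd(b, d) = 1, and let ω ∈ ℂ be a primitive d-th root of unity. Let X_b^n[k] be the set of tuples (x_1, …, x_n) ∈ {0, 1, …, b−1}^n with x_1 + ⋯ + x_n = k, and let τ be the permutation of such tuples defined by τ·(x_1, x_2, …, x_n) = (x_2, …, x_{n−1}, x_1, x_n), which cycles the first n − 1 coordinates and fixes the last. Then the coefficient of t^k in the polynomial ∏_{i=0}^{n−1} (1 + ω^i t + (ω^i t)^2 + ⋯ + (ω^i t)^(b−1)) ∈ ℂ[t] equals the number of elements of X_b^n[k] fixed by τ^((n−1)/d). -/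
open Polynomial Finset

/-!
Write `[b]_y = 1 + y + ⋯ + y ^ (b - 1)` and `n - 1 = d * m`. Since `ω ^ i` only depends on
`i mod d`, the product is `(∏_{i<d} [b]_{ω^i t}) ^ m * [b]_t`. Multiplying the inner product by
`1 - t ^ d = ∏_{i<d} (1 - ω^i t)` gives `∏_{i<d} (1 - (ω^b)^i t^b) = 1 - t ^ (b d)`, because
`ω ^ b` is again a primitive `d`-th root of unity; hence the inner product is `[b]_{t^d}`, and the
coefficient of `t ^ k` counts the pairs `(y, z) ∈ [b]^m × [b]` with `d * ∑ y + z = k`.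
On the other side, a tuple fixed by `τ ^ m` is `m`-periodic on its first `n - 1` coordinates, so it
is determined by its first `m` entries `y` and its last entry `z`, and its sum is `d * ∑ y + z`.
-/

@[to_additive]
theorem Finset.prod_range_mod_eq_pow {M : Type*} [CommMonoid M] (f : ℕ → M) (n m : ℕ) :
    ∏ i ∈ range (n * m), f (i % m) = (∏ i ∈ range m, f i) ^ n := by
  induction n with
  | zero => simp
  | succ n ih =>
    rw [Nat.succ_mul, prod_range_add, ih, pow_succ]
    congr 1
    refine prod_congr rfl fun i hi => ?_
    rw [Nat.mul_add_mod_self_right, Nat.mod_eq_of_lt (mem_range.mp hi)]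

namespace IsPrimitiveRoot

variable {R : Type*} [CommRing R] [IsDomain R] {ζ : R} {d : ℕ}

theorem prod_one_sub_pow_mul (hζ : IsPrimitiveRoot ζ d) (hd : 0 < d) (y : R) :
    ∏ i ∈ range d, (1 - ζ ^ i * y) = 1 - y ^ d := by
  simpa [eval_prod] using (congrArg (eval 1) (X_pow_sub_C_eq_prod hζ hd (rfl : y ^ d = _))).symm

theorem prod_geom_sum_pow_mul (hζ : IsPrimitiveRoot ζ d) {b : ℕ} (hbd : b.Coprime d) {y : R}
    (hy : y ^ d ≠ 1) :
    ∏ i ∈ range d, ∑ j ∈ range b, (ζ ^ i * y) ^ j = ∑ j ∈ range b, (y ^ d) ^ j := by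
  have hd : 0 < d := Nat.pos_of_ne_zero fun h => hy (by rw [h, pow_zero])
  refine mul_left_cancel₀ (sub_ne_zero.mpr hy.symm) ?_
  calc (1 - y ^ d) * ∏ i ∈ range d, ∑ j ∈ range b, (ζ ^ i * y) ^ j
      = ∏ i ∈ range d, (1 - ζ ^ i * y) * ∑ j ∈ range b, (ζ ^ i * y) ^ j := by
        rw [prod_mul_distrib, hζ.prod_one_sub_pow_mul hd]
    _ = ∏ i ∈ range d, (1 - (ζ ^ b) ^ i * y ^ b) := by
        simp_rw [mul_neg_geom_sum, mul_pow, ← pow_mul, mul_comm]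
    _ = (1 - y ^ d) * ∑ j ∈ range b, (y ^ d) ^ j := by
        rw [(hζ.pow_of_coprime b hbd).prod_one_sub_pow_mul hd, mul_neg_geom_sum, ← pow_mul,
          ← pow_mul, mul_comm]

end IsPrimitiveRoot

theorem Polynomial.coeff_sum_X_pow {R ι : Type*} [Semiring R] [Fintype ι] (e : ι → ℕ) (k : ℕ) :
    (∑ i, (X : R[X]) ^ e i).coeff k = Nat.card {i // e i = k} := by
  classical
  simp_rw [finsetSum_coeff, coeff_X_pow, sum_boole, Nat.card_eq_fintype_card,
    Fintype.card_subtype, eq_comm]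

theorem Polynomial.geom_sum_X_pow_pow_mul_geom_sum {R : Type*} [CommSemiring R] (b d m : ℕ) :
    (∑ j ∈ range b, ((X : R[X]) ^ d) ^ j) ^ m * ∑ j ∈ range b, (X : R[X]) ^ j =
      ∑ p : (Fin m → Fin b) × Fin b, X ^ (d * ∑ i, (p.1 i : ℕ) + p.2) := by
  rw [← Fin.sum_univ_eq_sum_range, ← Fin.sum_univ_eq_sum_range, ← Fin.prod_const,
    Fintype.prod_sum, Fintype.sum_mul_sum, Fintype.sum_prod_type]
  refine sum_congr rfl fun y _ => sum_congr rfl fun z _ => ?_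
  rw [pow_add, pow_mul, ← prod_pow_eq_pow_sum]

section RotateFixed

variable {α : Type*} {n m : ℕ}

/-- `x` is fixed by `τ ^ m`, where `τ` cyclically rotates the first `n - 1` coordinates. -/
def RotateFixed (m : ℕ) (x : Fin n → α) : Prop :=
  ∀ (i : Fin n) (hi : (i : ℕ) < n - 1),
    x ⟨((i : ℕ) + m) % (n - 1), (Nat.mod_lt _ (by omega)).trans_le (Nat.sub_le n 1)⟩ = x i

theorem RotateFixed.eq_mod {x : Fin n → α} (hx : RotateFixed m x) (hm : 0 < m) (i : Fin n)
    (hi : (i : ℕ) < n - 1) : x i = x ⟨i % m, (Nat.mod_le _ _).trans_lt i.isLt⟩ := by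
  obtain ⟨i, hin⟩ := i
  induction i using Nat.strong_induction_on with
  | _ i ih =>
    rcases lt_or_ge i m with him | him
    · simp only [Nat.mod_eq_of_lt him]
    · have h := hx ⟨i - m, by omega⟩ (by simp only; omega)
      simp only [Nat.sub_add_cancel him, Nat.mod_eq_of_lt hi] at h
      rw [h, ih (i - m) (by omega) (by omega) (by simp only; omega)]
      simp only [← Nat.mod_eq_sub_mod him]

theorem rotateFixed_of_eq_mod (hm : m ∣ n - 1) {x : Fin n → α}
    (h : ∀ (i : Fin n), (i : ℕ) < n - 1 → x i = x ⟨i % m, (Nat.mod_le _ _).trans_lt i.isLt⟩) :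
    RotateFixed m x := by
  intro i hi
  rw [h _ (Nat.mod_lt _ (by omega)), h i hi]
  simp only [Nat.mod_mod_of_dvd _ hm, Nat.add_mod_right]

def rotateFixedEquiv (hn : 2 ≤ n) (hm : m ∣ n - 1) :
    {x : Fin n → α // RotateFixed m x} ≃ (Fin m → α) × α where
  toFun x :=
    (fun r => x.1 ⟨r, by have := Nat.le_of_dvd (by omega) hm; omega⟩, x.1 ⟨n - 1, by omega⟩)
  invFun p := ⟨fun i => if h : (i : ℕ) < n - 1 then
      p.1 ⟨i % m, Nat.mod_lt _ (Nat.pos_of_dvd_of_pos hm (by omega))⟩ else p.2,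
    rotateFixed_of_eq_mod hm fun i hi => by simp [hi, (Nat.mod_le (i : ℕ) m).trans_lt hi]⟩
  left_inv x := by
    refine Subtype.ext (funext fun i => ?_)
    dsimp only
    split_ifs with hi
    · exact (x.2.eq_mod (Nat.pos_of_dvd_of_pos hm (by omega)) i hi).symm
    · exact congrArg x.1 (Fin.ext (by simp only; omega))
  right_inv p := by
    have := Nat.le_of_dvd (by omega) hm
    ext r
    · simp [Nat.mod_eq_of_lt r.isLt, show (r : ℕ) < n - 1 by omega]
    · simp

theorem sum_rotateFixedEquiv_symm {M : Type*} [AddCommMonoid M] {d : ℕ} (hn : 2 ≤ n)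
    (hdm : n - 1 = d * m) (w : α → M) (p : (Fin m → α) × α) :
    ∑ i, w (((rotateFixedEquiv hn (Dvd.intro_left d hdm.symm)).symm p).1 i) =
      d • ∑ r, w (p.1 r) + w p.2 := by
  have hm : 0 < m := Nat.pos_of_mul_pos_left (hdm ▸ (by omega : 0 < n - 1))
  let f : ℕ → M := fun r => if h : r < m then w (p.1 ⟨r, h⟩) else 0
  let g : ℕ → M := fun i => if i < n - 1 then f (i % m) else w p.2
  calc ∑ i, w (((rotateFixedEquiv hn (Dvd.intro_left d hdm.symm)).symm p).1 i)
      = ∑ i ∈ range n, g i := by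
        rw [← Fin.sum_univ_eq_sum_range]
        refine sum_congr rfl fun i _ => ?_
        simp only [g, f, rotateFixedEquiv, Equiv.coe_fn_symm_mk, Nat.mod_lt _ hm]
        split_ifs <;> rfl
    _ = ∑ i ∈ range (d * m), f (i % m) + w p.2 := by
        rw [← hdm, show n = n - 1 + 1 by omega, sum_range_succ, Nat.add_sub_cancel]
        simp only [g, lt_irrefl, if_false]
        congr 1
        exact sum_congr rfl fun i hi => if_pos (mem_range.mp hi)
    _ = d • ∑ r, w (p.1 r) + w p.2 := by
        rw [sum_range_mod_eq_nsmul, ← Fin.sum_univ_eq_sum_range]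
        simp [f]

theorem card_sum_eq_and_rotateFixed {b d k : ℕ} (hn : 2 ≤ n) (hdm : n - 1 = d * m) :
    Nat.card {x : Fin n → Fin b // (∑ i, (x i : ℕ)) = k ∧ RotateFixed m x} =
      Nat.card {p : (Fin m → Fin b) × Fin b // d * ∑ i, (p.1 i : ℕ) + p.2 = k} := by
  refine Nat.card_congr <| (Equiv.subtypeEquivRight fun x => and_comm).trans <|
    (Equiv.subtypeSubtypeEquivSubtypeInter _ _).symm.trans <|
    ((rotateFixedEquiv hn (Dvd.intro_left d hdm.symm)).symm.subtypeEquiv fun p => ?_).symm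
  rw [sum_rotateFixedEquiv_symm hn hdm, smul_eq_mul]

end RotateFixed

/-- **Theorem (Cyclic Sieving, near-rotation case, algebraic side).**
If `d ∣ (n-1)`, `gcd(b,d) = 1` and `ω` is a primitive `d`th root of unity, then the
coefficient of `t^k` in `∏_{i=0}^{n-1} (1 + ω^i t + ⋯ + (ω^i t)^(b-1))` equals the number
of tuples `(x_1, …, x_n) ∈ {0, …, b-1}^n` with `∑ x_i = k` fixed by the `((n-1)/d)`-th
power of the permutation `τ` which cyclically rotates the first `n-1` coordinates and fixes
the last: such tuples are exactly those with `x_{(i + (n-1)/d) mod (n-1)} = x_i` for all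
indices `i < n-1` (0-indexed). -/
theorem stmt_7 (b d n k : ℕ) (hn : 2 ≤ n) (hdn : d ∣ (n - 1))
    (hbd : Nat.gcd b d = 1) (ω : ℂ) (hω : IsPrimitiveRoot ω d) :
    (∏ i ∈ Finset.range n, (∑ j ∈ Finset.range b, C ((ω ^ i) ^ j) * X ^ j)).coeff k =
      (Nat.card {x : Fin n → Fin b //
        (∑ i, (x i : ℕ)) = k ∧
        ∀ i : Fin n, (i : ℕ) < n - 1 →
          x ⟨((i : ℕ) + (n - 1) / d) % (n - 1),
              lt_trans (Nat.mod_lt _ (by omega)) (by omega)⟩ = x i} : ℂ) := by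
  set m := (n - 1) / d
  have hdm : n - 1 = d * m := (Nat.mul_div_cancel' hdn).symm
  have hd : 0 < d := Nat.pos_of_dvd_of_pos hdn (by omega)
  have hXd : (X : ℂ[X]) ^ d ≠ 1 := fun h => by simpa [hd.ne'] using congrArg natDegree h
  have hfactor (i : ℕ) :
      ∑ j ∈ range b, C ((ω ^ i) ^ j) * X ^ j = ∑ j ∈ range b, (C ω ^ (i % d) * X) ^ j := by
    have hmod : ω ^ (i % d) = ω ^ i := by rw [hω.eq_orderOf, pow_mod_orderOf]
    simp_rw [mul_pow, ← map_pow, hmod]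
  have hprod : ∏ i ∈ range n, ∑ j ∈ range b, C ((ω ^ i) ^ j) * X ^ j =
      (∑ j ∈ range b, (X ^ d) ^ j) ^ m * ∑ j ∈ range b, X ^ j := by
    rw [show range n = range (m * d + 1) by rw [Nat.mul_comm]; congr 1; omega, prod_range_succ]
    simp_rw [hfactor]
    rw [prod_range_mod_eq_pow (fun r => ∑ j ∈ range b, (C ω ^ r * X) ^ j),
      (hω.map_of_injective C_injective).prod_geom_sum_pow_mul hbd hXd, Nat.mul_mod_left,
      pow_zero, one_mul]
  rw [hprod, geom_sum_X_pow_pow_mul_geom_sum, coeff_sum_X_pow]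
  exact_mod_cast (card_sum_eq_and_rotateFixed hn hdm).symm
end

section
/- Let b ≥ 2, d ≥ 1, n ≥ 1, k ≥ 0 be integers with gcd(b, d) = 1 and d dividing n + 1, let ω ∈ ℂ be a primitive d-th root of unity, and let S_{b,d} = {s ∈ ℕ : s ≥ 1 and there are no u, v ∈ ℕ with s = ub + vd}. Then ω^k times the coefficient of t^k in the polynomial ∏_{i=0}^{n−1} (1 + ω^i t + (ω^i t)^2 + ⋯ + (ω^i t)^(b−1)) ∈ ℂ[t] equals binom^{(b)}((n+1)/d − 1, k/d) + ∑_{s ∈ S_{b,d}} binom^{(b)}((n+1)/d − 1, (k − 1 − s)/d) − ∑_{s ∈ S_{b,d}} binom^{(b)}((n+1)/d − 1, (k − s)/d), where a term binom^{(b)}(u, v) is defined to be 0 whenever v is not a nonnegative integer (in particular whenever d does not divide the relevant numerator). -/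
/-!
Write `[b]_x = 1 + x + ⋯ + x ^ (b - 1)`. Substituting `t ↦ ω t` turns `ω ^ k` times the
coefficient of `t ^ k` into the coefficient of `t ^ k` in `∏_{i=1}^{n} [b]_{ω^i t}`. Since `ω ^ b`
is again a primitive `d`-th root of unity, `∏_{i<d} (1 - ω^i x) = 1 - x ^ d` gives
`∏_{i<d} [b]_{ω^i t} = [b]_{t^d}`, so by periodicity `∏_{i=0}^{n} [b]_{ω^i t} = [b]_{t^d} ^ m`
with `m = (n + 1) / d`.

On the other hand, `N` is a nonnegative combination of `b` and `d` iff `N - b` is one or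
`N = v d` with `v < b`, and by coprimality never both. Comparing coefficients, this says
`[b]_t (1 + (t - 1) ∑_{s ∈ S_{b,d}} t ^ s) = [b]_{t^d}`. Cancelling `[b]_t`, the product is
`[b]_{t^d} ^ (m - 1) (1 + (t - 1) ∑_{s ∈ S_{b,d}} t ^ s)`, whose coefficients are read off.
-/

open Polynomial Finset

/-- `binomB b n k` is the coefficient of `t^k` in `(1 + t + ⋯ + t^(b-1))^n`. -/
noncomputable def binomB (b n k : ℕ) : ℕ :=
  (((∑ j ∈ Finset.range b, (X : Polynomial ℕ) ^ j)) ^ n).coeff k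

def Representable (b d N : ℕ) : Prop := ∃ u v : ℕ, N = u * b + v * d

namespace Representable

variable {b d N : ℕ}

lemma zero : Representable b d 0 := ⟨0, 0, by simp⟩

lemma of_le_mul_pred (hbd : b.Coprime d) (hN : (b - 1) * (d - 1) ≤ N) :
    Representable b d N := by
  obtain ⟨u, v, h⟩ := Nat.exists_add_mul_eq_of_gcd_dvd_of_mul_pred_le b d N
    (by simp [hbd.gcd_eq_one]) (by simpa using hN)
  exact ⟨u, v, h.symm⟩

lemma iff_sub_or_dvd (hd : 0 < d) :
    Representable b d N ↔ (b ≤ N ∧ Representable b d (N - b)) ∨ (d ∣ N ∧ N / d < b) := by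
  constructor
  · rintro ⟨u | u, v, rfl⟩
    · by_cases hv : v < b
      · right
        simp [Nat.mul_div_cancel _ hd, hv]
      · -- `v * d - b = (d - 1) * b + (v - b) * d`
        left
        obtain ⟨w, rfl⟩ := Nat.exists_eq_add_of_le (not_lt.mp hv)
        obtain ⟨e, rfl⟩ := Nat.exists_eq_add_of_lt hd
        refine ⟨by nlinarith, e, w, ?_⟩
        rw [Nat.sub_eq_iff_eq_add (by nlinarith)]
        ring
    · left
      exact ⟨by nlinarith, u, v, by rw [add_one_mul]; omega⟩
  · rintro (⟨hbN, u, v, h⟩ | ⟨⟨v, rfl⟩, -⟩)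
    · exact ⟨u + 1, v, by rw [add_one_mul]; omega⟩
    · exact ⟨0, v, by ring⟩

/-- `v * d = (u + 1) * b + w * d` forces `b ∣ v - w`, impossible for `0 < v - w < b`. -/
lemma not_sub_of_dvd (hbd : b.Coprime d) (hbN : b ≤ N) (hdN : d ∣ N) (hNd : N / d < b) :
    ¬ Representable b d (N - b) := by
  rintro ⟨u, w, h⟩
  obtain ⟨v, rfl⟩ := hdN
  have hd : 0 < d := Nat.pos_of_ne_zero fun hd => by simp [hd] at hbN hNd; omega
  rw [Nat.mul_div_cancel_left _ hd, mul_comm] at *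
  have hkey : v * d = (u + 1) * b + w * d := by rw [add_one_mul]; omega
  have hwv : w < v := by
    have : 0 < (u + 1) * b := Nat.mul_pos u.succ_pos (by omega)
    exact Nat.lt_of_mul_lt_mul_right (a := d) (by omega)
  have hdvd : b ∣ (v - w) * d := ⟨u + 1, by rw [Nat.sub_mul, mul_comm b]; omega⟩
  have := Nat.le_of_dvd (Nat.sub_pos_of_lt hwv) (hbd.dvd_of_dvd_mul_right hdvd)
  omega

end Representable

lemma setOf_not_representable_finite {b d : ℕ} (hbd : b.Coprime d) :
    {s : ℕ | 1 ≤ s ∧ ¬ ∃ u v : ℕ, s = u * b + v * d}.Finite :=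
  (Set.finite_Iio ((b - 1) * (d - 1))).subset fun _ ⟨_, hs⟩ =>
    lt_of_not_ge fun h => hs (Representable.of_le_mul_pred hbd h)

variable {R : Type*}

section Gaps

variable {b d : ℕ} {S : Finset ℕ}

lemma mem_iff_not_representable (hS : ∀ s, s ∈ S ↔ 1 ≤ s ∧ ¬ Representable b d s) (N : ℕ) :
    N ∈ S ↔ ¬ Representable b d N := by
  rw [hS]
  rcases N.eq_zero_or_pos with rfl | hN
  · simp [Representable.zero]
  · simp [Nat.one_le_iff_ne_zero.mpr hN.ne']

theorem geom_sum_mul_one_add_mul_sum_gaps [CommRing R] (hd : 0 < d) (hbd : b.Coprime d)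
    (hS : ∀ s, s ∈ S ↔ 1 ≤ s ∧ ¬ Representable b d s) :
    (∑ j ∈ range b, (X : R[X]) ^ j) * (1 + (X - 1) * ∑ s ∈ S, X ^ s) =
      expand R d (∑ j ∈ range b, X ^ j) := by
  rw [mul_add, mul_one, ← mul_assoc, geom_sum_mul, sub_one_mul]
  ext N
  simp only [coeff_add, coeff_sub, coeff_X_pow_mul', coeff_expand hd,
    finsetSum_coeff, coeff_X_pow, sum_ite_eq, mem_range]
  have hiff := Representable.iff_sub_or_dvd (b := b) (N := N) hd
  have hmem := mem_iff_not_representable hS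
  conv_rhs => rw [← ite_and]
  by_cases hbN : b ≤ N
  · simp only [hbN, not_lt.mpr hbN, if_true, if_false, zero_add]
    by_cases hC : d ∣ N ∧ N / d < b
    · rw [if_pos hC, if_pos ((hmem _).mpr (Representable.not_sub_of_dvd hbd hbN hC.1 hC.2)),
        if_neg fun h => (hmem N).mp h (hiff.mpr (Or.inr hC))]
      norm_num
    · have hS' : N - b ∈ S ↔ N ∈ S := by
        rw [hmem, hmem, hiff]
        simp [hbN, hC]
      simp only [hS', sub_self, if_neg hC]
  · have hS' : N ∈ S ↔ ¬ (d ∣ N ∧ N / d < b) := by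
      rw [hmem, hiff]
      simp [hbN]
    by_cases hC : d ∣ N ∧ N / d < b <;> simp [hbN, lt_of_not_ge hbN, hS', hC]

end Gaps

lemma IsPrimitiveRoot.prod_one_sub_pow_mul_s17 [CommRing R] [IsDomain R] {ζ : R} {d : ℕ}
    (hζ : IsPrimitiveRoot ζ d) (hd : 0 < d) (x : R) :
    ∏ i ∈ range d, (1 - ζ ^ i * x) = 1 - x ^ d := by
  simpa [eval_prod] using (congrArg (eval 1) (X_pow_sub_C_eq_prod hζ hd rfl)).symm

lemma Function.Periodic.prod_range_mul {M : Type*} [CommMonoid M] {f : ℕ → M} {d : ℕ}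
    (hf : Function.Periodic f d) (m : ℕ) :
    ∏ i ∈ range (d * m), f i = (∏ i ∈ range d, f i) ^ m := by
  induction m with
  | zero => simp
  | succ m ih =>
    rw [Nat.mul_succ, prod_range_add, ih, pow_succ]
    congr 1
    exact prod_congr rfl fun i _ => by simpa [add_comm, mul_comm] using (hf.nat_mul m) i

noncomputable def scaledGeomSum [Semiring R] (b : ℕ) (c : R) : R[X] :=
  ∑ j ∈ range b, C (c ^ j) * X ^ j

section scaledGeomSum

variable [CommRing R] (b : ℕ)

lemma scaledGeomSum_eq (c : R) : scaledGeomSum b c = ∑ j ∈ range b, (C c * X) ^ j := by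
  simp [scaledGeomSum, mul_pow]

lemma scaledGeomSum_one : scaledGeomSum b (1 : R) = ∑ j ∈ range b, X ^ j := by
  simp [scaledGeomSum]

lemma scaledGeomSum_mul_one_sub (c : R) :
    scaledGeomSum b c * (1 - C c * X) = 1 - C c ^ b * X ^ b := by
  rw [scaledGeomSum_eq, geom_sum_mul_neg, mul_pow]

lemma scaledGeomSum_comp (c a : R) :
    (scaledGeomSum b c).comp (C a * X) = scaledGeomSum b (c * a) := by
  simp [scaledGeomSum_eq, Polynomial.sum_comp, mul_pow, ← mul_assoc]

end scaledGeomSum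

theorem IsPrimitiveRoot.prod_scaledGeomSum [CommRing R] [IsDomain R] {ζ : R} {b d : ℕ}
    (hζ : IsPrimitiveRoot ζ d) (hd : 0 < d) (hbd : b.Coprime d) :
    ∏ i ∈ range d, scaledGeomSum b (ζ ^ i) = expand R d (∑ j ∈ range b, X ^ j) := by
  have hC : IsPrimitiveRoot (C ζ) d := hζ.map_of_injective C_injective
  have hne : (1 - X ^ d : R[X]) ≠ 0 := by
    intro h
    simpa [hd.ne'] using congrArg (eval 0) h
  refine mul_right_cancel₀ hne ?_
  calc (∏ i ∈ range d, scaledGeomSum b (ζ ^ i)) * (1 - X ^ d)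
      = ∏ i ∈ range d, (scaledGeomSum b (ζ ^ i) * (1 - C (ζ ^ i) * X)) := by
        rw [prod_mul_distrib, ← hC.prod_one_sub_pow_mul_s17 hd X]
        simp
    _ = ∏ i ∈ range d, (1 - (C ζ ^ b) ^ i * X ^ b) := by
        refine prod_congr rfl fun i _ => ?_
        rw [scaledGeomSum_mul_one_sub, map_pow, ← pow_mul, ← pow_mul, mul_comm i b]
    _ = 1 - X ^ (b * d) := by rw [(hC.pow_of_coprime b hbd).prod_one_sub_pow_mul_s17 hd, pow_mul]
    _ = expand R d (∑ j ∈ range b, X ^ j) * (1 - X ^ d) := by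
        have := congrArg (expand R d) (geom_sum_mul_neg (X : R[X]) b)
        simpa [← pow_mul, mul_comm d b] using this.symm

theorem IsPrimitiveRoot.prod_scaledGeomSum_succ_mul_geom_sum [CommRing R] [IsDomain R] {ζ : R}
    {b d n m : ℕ} (hζ : IsPrimitiveRoot ζ d) (hd : 0 < d) (hbd : b.Coprime d)
    (hnm : n + 1 = d * m) :
    (∏ i ∈ range n, scaledGeomSum b (ζ ^ (i + 1))) * ∑ j ∈ range b, X ^ j =
      expand R d (∑ j ∈ range b, X ^ j) ^ m := by
  have hper : Function.Periodic (fun i => scaledGeomSum b (ζ ^ i)) d := fun i => by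
    simp only [pow_add, hζ.pow_eq_one, mul_one]
  rw [← hζ.prod_scaledGeomSum hd hbd, ← hper.prod_range_mul, ← hnm, prod_range_succ',
    pow_zero, scaledGeomSum_one]

lemma coeff_geom_sum_pow [Semiring R] (b n k : ℕ) :
    ((∑ j ∈ range b, (X : R[X]) ^ j) ^ n).coeff k = binomB b n k := by
  rw [binomB, ← eq_natCast (Nat.castRingHom R), ← coeff_map]
  simp [Polynomial.map_pow, Polynomial.map_sum]

lemma coeff_mul_one_add_mul_sum [CommRing R] (Q : R[X]) (S : Finset ℕ) (k : ℕ) :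
    (Q * (1 + (X - 1) * ∑ s ∈ S, X ^ s)).coeff k =
      Q.coeff k + ∑ s ∈ S, (if s + 1 ≤ k then Q.coeff (k - 1 - s) else 0) -
        ∑ s ∈ S, (if s ≤ k then Q.coeff (k - s) else 0) := by
  have : Q * (1 + (X - 1) * ∑ s ∈ S, X ^ s) =
      Q + (∑ s ∈ S, Q * X ^ (s + 1) - ∑ s ∈ S, Q * X ^ s) := by
    rw [mul_add, mul_one, add_right_inj, mul_sum, mul_sum, ← sum_sub_distrib]
    exact sum_congr rfl fun s _ => by ring
  simp only [this, coeff_add, coeff_sub, finsetSum_coeff, coeff_mul_X_pow', Nat.sub_sub,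
    Nat.add_comm 1, add_sub_assoc]

theorem stmt_17_general (b d n k : ℕ) (hb : 2 ≤ b) (hd : 1 ≤ d)
    (hbd : Nat.gcd b d = 1) (hdn : d ∣ (n + 1)) (ω : ℂ) (hω : IsPrimitiveRoot ω d) :
    ∃ hfin : {s : ℕ | 1 ≤ s ∧ ¬ ∃ u v : ℕ, s = u * b + v * d}.Finite,
      ω ^ k *
          (∏ i ∈ Finset.range n,
            (∑ j ∈ Finset.range b, C ((ω ^ i) ^ j) * X ^ j)).coeff k =
        (if d ∣ k then (binomB b ((n + 1) / d - 1) (k / d) : ℂ) else 0) +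
          (∑ s ∈ hfin.toFinset,
            if s + 1 ≤ k ∧ d ∣ (k - 1 - s) then
              (binomB b ((n + 1) / d - 1) ((k - 1 - s) / d) : ℂ) else 0) -
          (∑ s ∈ hfin.toFinset,
            if s ≤ k ∧ d ∣ (k - s) then
              (binomB b ((n + 1) / d - 1) ((k - s) / d) : ℂ) else 0) := by
  obtain ⟨m, hm⟩ := hdn
  have hm0 : m ≠ 0 := by rintro rfl; simp at hm
  refine ⟨setOf_not_representable_finite hbd, ?_⟩
  set S := (setOf_not_representable_finite hbd).toFinset
  have hS : ∀ s, s ∈ S ↔ 1 ≤ s ∧ ¬ Representable b d s := fun s => Set.Finite.mem_toFinset _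
  have hprod : ∏ i ∈ range n, scaledGeomSum b (ω ^ (i + 1)) =
      expand ℂ d (∑ j ∈ range b, X ^ j) ^ (m - 1) * (1 + (X - 1) * ∑ s ∈ S, X ^ s) := by
    refine mul_right_cancel₀ (monic_geom_sum_X (R := ℂ) (n := b) (by omega)).ne_zero ?_
    rw [hω.prod_scaledGeomSum_succ_mul_geom_sum hd hbd hm, mul_assoc,
      mul_comm _ (∑ j ∈ range b, _), geom_sum_mul_one_add_mul_sum_gaps hd hbd hS, ← pow_succ,
      Nat.sub_add_cancel (Nat.one_le_iff_ne_zero.mpr hm0)]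
  have hcomp : (∏ i ∈ range n, ∑ j ∈ range b, C ((ω ^ i) ^ j) * X ^ j).comp (C ω * X) =
      ∏ i ∈ range n, scaledGeomSum b (ω ^ (i + 1)) := by
    change (∏ i ∈ range n, scaledGeomSum b (ω ^ i)).comp _ = _
    simp only [Polynomial.prod_comp, scaledGeomSum_comp, ← pow_succ]
  rw [mul_comm, ← comp_C_mul_X_coeff, hcomp, hprod, coeff_mul_one_add_mul_sum, ← map_pow, hm,
    Nat.mul_div_cancel_left _ hd]
  simp only [coeff_expand hd, coeff_geom_sum_pow, ite_and]

/-- **Theorem (alternating formula via the Sylvester set).**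
Let `gcd(b,d) = 1`, `d ∣ (n+1)` and let `ω` be a primitive `d`th root of unity. The set
`S_{b,d}` of positive integers not representable as `ub + vd` is finite, and `ω^k` times
the coefficient of `t^k` in `∏_{i=0}^{n-1} (1 + ω^i t + ⋯ + (ω^i t)^(b-1))` equals
`binom^(b)((n+1)/d - 1, k/d) + ∑_{s ∈ S_{b,d}} binom^(b)((n+1)/d - 1, (k-1-s)/d)
 - ∑_{s ∈ S_{b,d}} binom^(b)((n+1)/d - 1, (k-s)/d)`,
where a term `binom^(b)(u, v)` is `0` whenever `v` is not a nonnegative integer. -/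
theorem stmt_17 (b d n k : ℕ) (hb : 2 ≤ b) (hd : 1 ≤ d) (hn : 1 ≤ n)
    (hbd : Nat.gcd b d = 1) (hdn : d ∣ (n + 1)) (ω : ℂ) (hω : IsPrimitiveRoot ω d) :
    ∃ hfin : {s : ℕ | 1 ≤ s ∧ ¬ ∃ u v : ℕ, s = u * b + v * d}.Finite,
      ω ^ k *
          (∏ i ∈ Finset.range n,
            (∑ j ∈ Finset.range b, C ((ω ^ i) ^ j) * X ^ j)).coeff k =
        (if d ∣ k then (binomB b ((n + 1) / d - 1) (k / d) : ℂ) else 0) +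
          (∑ s ∈ hfin.toFinset,
            if s + 1 ≤ k ∧ d ∣ (k - 1 - s) then
              (binomB b ((n + 1) / d - 1) ((k - 1 - s) / d) : ℂ) else 0) -
          (∑ s ∈ hfin.toFinset,
            if s ≤ k ∧ d ∣ (k - s) then
              (binomB b ((n + 1) / d - 1) ((k - s) / d) : ℂ) else 0) :=
  stmt_17_general b d n k hb hd hbd hdn ω hω
end
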